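/- arXiv:2512.12294 — 3 statements merged into one kernel-verified Lean document; each statement's English description precedes it below -/
import Mathlib

section
/- For the weighted chain [3, 2^k] (a chain of k+1 curves with self-intersections -3, -2, ..., -2), the gap Gap = (k+1) + Σ_i e_i·(2 + E_i^2) equals 2(k+1)^2/(2k+3), where e_i is the discrepancy-type coefficient of the i-th curve in the minimal resolution of the corresponding cyclic quotient singularity. In particular, its integer part is k. -/
/-- Gap of the chain `[3, 2^k]`: the coefficients `e i` solve the adjunction system
`Σ_j e j (E i · E j) = 2 + (E i)^2`, and the gap `(k+1) + Σ e i (2 + (E i)^2)`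
equals `2(k+1)^2/(2k+3)`, whose integer part is `k`. -/
theorem stmt6 (k : ℕ) (e : ℕ → ℚ)
    (hz : ∀ j, k < j → e j = 0)
    (h0 : -3 * e 0 + e 1 = 2 + (-3))
    (hi : ∀ i, 1 ≤ i → i ≤ k → e (i - 1) - 2 * e i + e (i + 1) = 2 + (-2)) :
    ((k : ℚ) + 1) +
        ∑ i ∈ Finset.range (k + 1), e i * (2 + (if i = 0 then (-3 : ℚ) else -2)) =
      2 * ((k : ℚ) + 1) ^ 2 / (2 * k + 3) ∧
    ⌊2 * ((k : ℚ) + 1) ^ 2 / (2 * k + 3)⌋ = k := by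
  -- the coefficients form an arithmetic progression
  have aux : ∀ i, i ≤ k →
      e i = e 0 + i * (2 * e 0 - 1) ∧ e (i + 1) = e 0 + (i + 1) * (2 * e 0 - 1) := by
    intro i
    induction i with
    | zero => intro _; constructor <;> push_cast <;> linarith
    | succ n ih =>
      intro hn
      obtain ⟨h1, h2⟩ := ih (Nat.le_of_succ_le hn)
      refine ⟨by push_cast at h2 ⊢; linarith, ?_⟩
      have h3 := hi (n + 1) (Nat.le_add_left 1 n) hn
      simp only [Nat.add_sub_cancel] at h3
      push_cast at h2 ⊢
      linarith
  have hk1 : e (k + 1) = 0 := hz (k + 1) (Nat.lt_succ_self k)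
  have he0 : e 0 * (2 * (k : ℚ) + 3) = (k : ℚ) + 1 := by
    have := (aux k le_rfl).2
    rw [hk1] at this
    push_cast at this
    nlinarith [this]
  have hpos : (0 : ℚ) < 2 * (k : ℚ) + 3 := by positivity
  have hsum : ∑ i ∈ Finset.range (k + 1), e i * (2 + (if i = 0 then (-3 : ℚ) else -2))
      = -e 0 := by
    rw [Finset.sum_eq_single 0]
    · norm_num
    · intro b _ hb; simp [hb]
    · simp
  constructor
  · rw [hsum, eq_div_iff (ne_of_gt hpos)]
    nlinarith [he0]
  · rw [Int.floor_eq_iff]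
    push_cast
    rw [le_div_iff₀ hpos, div_lt_iff₀ hpos]
    constructor <;> nlinarith [sq_nonneg ((k:ℚ))]
end

section
/- Let k be algebraically closed with char(k) ≠ 3, C = {x^3 = y^2 z} the cuspidal cubic, Q = {-45x^2 - 5y^2 + z^2 + 24xy + 40yz - 15zx = 0}, and t = [1:1:1]. Write C ∩ Q = {s, t} (where possibly s = t). Then s = t if and only if char(k) = 2. -/
open Polynomial in
/-- With `C ∩ Q = {s, t}` (possibly `s = t`), one has `s = t` iff `char k = 2`:
the sextic obtained by substituting the parametrization of `C` into the
equation of `Q` is divisible by `(X - 1)^6` iff `char k = 2`. -/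
theorem stmt11 (k : Type*) [Field k] [IsAlgClosed k] (hchar : ringChar k ≠ 3) :
    ((X - 1) ^ 6 ∣
      (-5 * X ^ 6 + 24 * X ^ 5 - 45 * X ^ 4 + 40 * X ^ 3 - 15 * X ^ 2 + 1 :
        Polynomial k)) ↔ ringChar k = 2 := by
  have hfac : (-5 * X ^ 6 + 24 * X ^ 5 - 45 * X ^ 4 + 40 * X ^ 3 - 15 * X ^ 2 + 1 :
      Polynomial k) = (X - 1) ^ 5 * (-5 * X - 1) := by ring
  have hX1 : (X - 1 : Polynomial k) ≠ 0 := X_sub_C_ne_zero 1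
  have h5 : ((X - 1 : Polynomial k)) ^ 5 ≠ 0 := pow_ne_zero _ hX1
  rw [hfac, pow_succ, mul_comm ((X - 1 : Polynomial k) ^ 5) (X - 1),
    mul_comm ((X - 1 : Polynomial k) ^ 5) (-5 * X - 1),
    mul_dvd_mul_iff_right h5]
  have hroot : ((X - 1 : Polynomial k) ∣ (-5 * X - 1)) ↔ ((6 : k) = 0) := by
    have : (X - 1 : Polynomial k) = X - C 1 := by simp
    rw [this, dvd_iff_isRoot, IsRoot.def]
    simp only [eval_sub, eval_mul, eval_add, eval_neg, eval_one, eval_X,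
      eval_ofNat, eval_C]
    constructor
    · intro h
      have : (-5 * 1 - 1 : k) = -6 := by ring
      rw [this] at h
      linear_combination -h
    · intro h
      have : (-5 * 1 - 1 : k) = -6 := by ring
      rw [this]
      simp [show (6:k) = 0 from h]
  rw [hroot]
  constructor
  · intro h6
    have hdvd : ringChar k ∣ 6 := by
      have := (CharP.cast_eq_zero_iff k (ringChar k) 6).2
      exact (ringChar.dvd h6)
    rcases CharP.char_is_prime_or_zero k (ringChar k) with hp | h0
    · have h6 : (6 : ℕ) = 2 * 3 := by norm_num
      rw [h6] at hdvd
      rcases hp.dvd_mul.1 hdvd with h | h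
      · exact (Nat.prime_dvd_prime_iff_eq hp (by norm_num)).1 h
      · exact absurd ((Nat.prime_dvd_prime_iff_eq hp (by norm_num)).1 h) hchar
    · rw [h0] at hdvd; norm_num at hdvd
  · intro h2
    have : CharP k 2 := h2 ▸ ringChar.charP k
    have := (CharP.cast_eq_zero_iff k 2 6).2 (by norm_num)
    simpa using this
end

section
/- There are no integers x, y ≥ 2 and j ≥ 2 satisfying 1/x + 1/y = (6j+6)/(10j+9). -/
/-!
Clearing denominators gives `(x + y)(10j + 9) = (6j + 6)xy` in `ℕ`. Since `(6j + 6)/(10j + 9) > 3/5`,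
we get `3xy < 5(x + y)`, which forces `min x y ∈ {2, 3}`. Substituting `x = 2` or `x = 3` leaves an
equation linear in `y` that confines `y` to a few values, none of which yields an integer `j ≥ 1`.
-/

lemma nat_eq_of_one_div_add_one_div_eq {x y j : ℕ} (hx : x ≠ 0) (hy : y ≠ 0)
    (h : (1 : ℚ) / x + 1 / y = (6 * (j : ℚ) + 6) / (10 * j + 9)) :
    (x + y) * (10 * j + 9) = (6 * j + 6) * (x * y) := by
  have hxq : (x : ℚ) ≠ 0 := by exact_mod_cast hx
  have hyq : (y : ℚ) ≠ 0 := by exact_mod_cast hy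
  rw [div_add_div _ _ hxq hyq, div_eq_div_iff (by positivity) (by positivity)] at h
  exact_mod_cast (by linear_combination h : ((x : ℚ) + y) * (10 * j + 9) = (6 * j + 6) * (x * y))

lemma three_mul_mul_lt_of_eq {x y j : ℕ} (hx : x ≠ 0) (hy : y ≠ 0)
    (h : (x + y) * (10 * j + 9) = (6 * j + 6) * (x * y)) : 3 * (x * y) < 5 * (x + y) := by
  have hxy : 0 < x * y := by positivity
  nlinarith

lemma le_three_of_three_mul_mul_lt {x y : ℕ} (hxy : x ≤ y)
    (h : 3 * (x * y) < 5 * (x + y)) : x ≤ 3 := by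
  nlinarith

lemma two_add_mul_ne {y j : ℕ} (hj : 1 ≤ j) :
    (2 + y) * (10 * j + 9) ≠ (6 * j + 6) * (2 * y) := by
  intro h
  have hlin : y * (2 * j + 3) = 20 * j + 18 := by linarith
  have hy_lt : y < 10 := by nlinarith
  have hy_gt : 6 < y := by nlinarith
  interval_cases y <;> omega

lemma three_add_mul_ne {y j : ℕ} (hj : 1 ≤ j) :
    (3 + y) * (10 * j + 9) ≠ (6 * j + 6) * (3 * y) := by
  intro h
  have hlin : y * (8 * j + 9) = 30 * j + 27 := by linarith
  have hy_lt : y < 4 := by nlinarith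
  have hy_gt : 3 < y := by nlinarith
  omega

theorem add_mul_ne_mul_mul {x y j : ℕ} (hx : 2 ≤ x) (hy : 2 ≤ y) (hj : 1 ≤ j) :
    (x + y) * (10 * j + 9) ≠ (6 * j + 6) * (x * y) := by
  wlog hxy : x ≤ y generalizing x y
  · rw [add_comm, mul_comm x]
    exact this hy hx (by omega)
  intro h
  have hx3 := le_three_of_three_mul_mul_lt hxy (three_mul_mul_lt_of_eq (by omega) (by omega) h)
  interval_cases x
  · exact two_add_mul_ne hj h
  · exact three_add_mul_ne hj h

/-- Case 4a of Lemma 4.40: `1/x + 1/y = (6j+6)/(10j+9)` has no solution with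
`x, y ≥ 2` and `j ≥ 2`. -/
theorem stmt14 : ¬ ∃ (x y j : ℕ), 2 ≤ x ∧ 2 ≤ y ∧ 2 ≤ j ∧
    (1 : ℚ) / x + 1 / y = (6 * (j : ℚ) + 6) / (10 * j + 9) := by
  rintro ⟨x, y, j, hx, hy, hj, h⟩
  exact add_mul_ne_mul_mul hx hy (by omega)
    (nat_eq_of_one_div_add_one_div_eq (by omega) (by omega) h)
end
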